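/- Let δ > 0 and set s_j := 2^{((1+2δ)/(2+2δ))·j} for j ∈ ℕ. Then there exist constants c₁, c₂ > 0 and j₀ ∈ ℕ such that for all j ≥ j₀: c₁ · 2^{−j} ≤ ( ∑_{m∈ℤ²∖{0}} |m|^{−(4+2δ)} ) · ( ∑_{n∈ℤ², 2^{j−1}/s_j ≤ |n| ≤ 2^{j+1}/s_j} |n|^{−(4+2δ)} ) ≤ c₂ · 2^{−j}. -/

import Mathlib

/-!
The first factor is a fixed convergent lattice sum, since `p = 4 + 2δ > 2`. The second runs over
the annulus `r ≤ |n| ≤ 4r` with `r = 2^j / (2 s_j) = 2^{j/(2+2δ) - 1}`: it contains `≍ r²` lattice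
points, each contributing `≍ r^{-p}`, so it is `≍ r^{2-p} = r^{-(2+2δ)} ≍ 2^{-j}`. The lattice
points are counted by squares: the annulus lies in `[-⌈4r⌉, ⌈4r⌉]²` and contains `[⌈r⌉, 2⌈r⌉]²`.
-/

noncomputable section

/-- The lattice point `m ∈ ℤ²` viewed as a vector in `ℝ²`. -/
def intVec (m : ℤ × ℤ) : EuclideanSpace ℝ (Fin 2) :=
  (WithLp.equiv 2 (Fin 2 → ℝ)).symm ![(m.1 : ℝ), (m.2 : ℝ)]

lemma sq_norm_intVec (m : ℤ × ℤ) : ‖intVec m‖ ^ 2 = (m.1 : ℝ) ^ 2 + (m.2 : ℝ) ^ 2 := by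
  simp [intVec, EuclideanSpace.norm_sq_eq, Fin.sum_univ_two]

lemma abs_fst_le_norm_intVec (m : ℤ × ℤ) : |(m.1 : ℝ)| ≤ ‖intVec m‖ :=
  abs_le_of_sq_le_sq (by nlinarith [sq_norm_intVec m, sq_nonneg (m.2 : ℝ)]) (norm_nonneg _)

lemma abs_snd_le_norm_intVec (m : ℤ × ℤ) : |(m.2 : ℝ)| ≤ ‖intVec m‖ :=
  abs_le_of_sq_le_sq (by nlinarith [sq_norm_intVec m, sq_nonneg (m.1 : ℝ)]) (norm_nonneg _)

lemma norm_finTwo_le_norm_intVec (m : ℤ × ℤ) : ‖(![m.1, m.2] : Fin 2 → ℤ)‖ ≤ ‖intVec m‖ := by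
  rw [EisensteinSeries.norm_eq_max_natAbs]
  simpa [Nat.cast_natAbs] using ⟨abs_fst_le_norm_intVec m, abs_snd_le_norm_intVec m⟩

def latticeZeta (p : ℝ) : ℝ :=
  ∑' m : ℤ × ℤ, Set.indicator {m : ℤ × ℤ | m ≠ 0} (fun m => ‖intVec m‖ ^ (-p)) m

def annulus (r R : ℝ) : Set (ℤ × ℤ) := {n | r ≤ ‖intVec n‖ ∧ ‖intVec n‖ ≤ R}

def annulusSum (p r R : ℝ) : ℝ :=
  ∑' n : ℤ × ℤ, (annulus r R).indicator (fun n => ‖intVec n‖ ^ (-p)) n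

lemma summable_indicator_norm_intVec_rpow {p : ℝ} (hp : 2 < p) :
    Summable (Set.indicator {m : ℤ × ℤ | m ≠ 0} (fun m => ‖intVec m‖ ^ (-p))) := by
  have hsum : Summable (fun m : ℤ × ℤ => ‖(![m.1, m.2] : Fin 2 → ℤ)‖ ^ (-p)) := by
    simpa [finTwoArrowEquiv, Function.comp_def] using
      (finTwoArrowEquiv ℤ).symm.summable_iff.mpr (EisensteinSeries.summable_one_div_norm_rpow hp)
  refine hsum.of_nonneg_of_le (Set.indicator_nonneg fun m _ => by positivity) fun m => ?_
  by_cases hm : m = 0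
  · rw [Set.indicator_of_notMem (by simp [hm])]
    positivity
  · rw [Set.indicator_of_mem hm]
    have hpos : 0 < ‖(![m.1, m.2] : Fin 2 → ℤ)‖ :=
      norm_pos_iff.mpr fun h => hm (Prod.ext (congrFun h 0) (congrFun h 1))
    exact Real.rpow_le_rpow_of_nonpos hpos (norm_finTwo_le_norm_intVec m) (by linarith)

lemma one_le_latticeZeta {p : ℝ} (hp : 2 < p) : 1 ≤ latticeZeta p := by
  have hunit : ‖intVec (1, 0)‖ = 1 := by
    have h := sq_norm_intVec (1, 0)
    norm_num at h
    exact h.resolve_right (by linarith [norm_nonneg (intVec (1, 0))])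
  calc (1 : ℝ) = Set.indicator {m : ℤ × ℤ | m ≠ 0} (fun m => ‖intVec m‖ ^ (-p)) (1, 0) := by
        simp [hunit]
    _ ≤ latticeZeta p := (summable_indicator_norm_intVec_rpow hp).le_tsum _
        fun m _ => Set.indicator_nonneg (fun m _ => by positivity) m

def latticeSquare (a b : ℤ) : Finset (ℤ × ℤ) := Finset.Icc a b ×ˢ Finset.Icc a b

lemma card_latticeSquare {a b : ℤ} (h : a ≤ b + 1) :
    ((latticeSquare a b).card : ℝ) = ((b : ℝ) + 1 - a) ^ 2 := by
  rw [latticeSquare, Finset.card_product, Int.card_Icc, Nat.cast_mul, ← sq]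
  congr 1
  exact_mod_cast Int.toNat_of_nonneg (by omega)

lemma mem_latticeSquare_of_norm_intVec_le {n : ℤ × ℤ} {M : ℤ} (h : ‖intVec n‖ ≤ M) :
    n ∈ latticeSquare (-M) M := by
  have h1 : |(n.1 : ℝ)| ≤ M := (abs_fst_le_norm_intVec n).trans h
  have h2 : |(n.2 : ℝ)| ≤ M := (abs_snd_le_norm_intVec n).trans h
  simp only [latticeSquare, Finset.mem_product, Finset.mem_Icc, ← abs_le]
  exact ⟨by exact_mod_cast h1, by exact_mod_cast h2⟩

lemma annulusSum_eq_sum_latticeSquare (p r R : ℝ) :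
    annulusSum p r R = ∑ n ∈ latticeSquare (-⌈R⌉) ⌈R⌉,
      (annulus r R).indicator (fun n => ‖intVec n‖ ^ (-p)) n :=
  tsum_eq_sum fun _ hn => Set.indicator_of_notMem
    (fun hmem => hn (mem_latticeSquare_of_norm_intVec_le (hmem.2.trans (Int.le_ceil R)))) _

lemma annulusSum_le {p r R : ℝ} (hp : 0 ≤ p) (hr : 0 < r) (hR : 0 ≤ R) :
    annulusSum p r R ≤ (2 * R + 3) ^ 2 * r ^ (-p) := by
  have hM : (0 : ℤ) ≤ ⌈R⌉ := Int.ceil_nonneg hR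
  have hterm : ∀ n ∈ latticeSquare (-⌈R⌉) ⌈R⌉,
      (annulus r R).indicator (fun n => ‖intVec n‖ ^ (-p)) n ≤ r ^ (-p) := by
    intro n _
    by_cases hn : n ∈ annulus r R
    · rw [Set.indicator_of_mem hn]
      exact Real.rpow_le_rpow_of_nonpos hr hn.1 (neg_nonpos.mpr hp)
    · rw [Set.indicator_of_notMem hn]
      positivity
  have hcard : ((latticeSquare (-⌈R⌉) ⌈R⌉).card : ℝ) ≤ (2 * R + 3) ^ 2 := by
    rw [card_latticeSquare (by omega), Int.cast_neg]
    have hM' : (0 : ℝ) ≤ ⌈R⌉ := by exact_mod_cast hM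
    have := Int.ceil_lt_add_one R
    exact pow_le_pow_left₀ (by linarith) (by linarith) 2
  rw [annulusSum_eq_sum_latticeSquare]
  calc _ ≤ (latticeSquare (-⌈R⌉) ⌈R⌉).card • r ^ (-p) := Finset.sum_le_card_nsmul _ _ _ hterm
    _ ≤ (2 * R + 3) ^ 2 * r ^ (-p) := by
      rw [nsmul_eq_mul]
      exact mul_le_mul_of_nonneg_right hcard (by positivity)

lemma latticeSquare_ceil_subset_annulus {r : ℝ} (hr : 3 ≤ r) :
    ↑(latticeSquare ⌈r⌉ (2 * ⌈r⌉)) ⊆ annulus r (4 * r) := by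
  intro n hn
  simp only [Finset.mem_coe, latticeSquare, Finset.mem_product, Finset.mem_Icc] at hn
  obtain ⟨⟨h1, h1'⟩, h2, h2'⟩ := hn
  have hN := Int.le_ceil r
  have hN' := Int.ceil_lt_add_one r
  have h1r : (⌈r⌉ : ℝ) ≤ n.1 := by exact_mod_cast h1
  have h1r' : (n.1 : ℝ) ≤ 2 * ⌈r⌉ := by exact_mod_cast h1'
  have h2r : (⌈r⌉ : ℝ) ≤ n.2 := by exact_mod_cast h2
  have h2r' : (n.2 : ℝ) ≤ 2 * ⌈r⌉ := by exact_mod_cast h2'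
  refine ⟨(hN.trans h1r).trans ((le_abs_self _).trans (abs_fst_le_norm_intVec n)), ?_⟩
  -- `|n|² ≤ 8 ⌈r⌉² ≤ 8 (r + 1)² ≤ 16 r²` once `r ≥ 1 + √2`
  refine (pow_le_pow_iff_left₀ (norm_nonneg _) (by positivity) two_ne_zero).mp ?_
  rw [sq_norm_intVec]
  nlinarith

lemma le_annulusSum_four_mul {p r : ℝ} (hp : 0 ≤ p) (hr : 3 ≤ r) :
    r ^ 2 * (4 * r) ^ (-p) ≤ annulusSum p r (4 * r) := by
  have hN := Int.le_ceil r
  have hN0 : 0 ≤ ⌈r⌉ := Int.ceil_nonneg (by linarith)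
  have hcard : r ^ 2 ≤ ((latticeSquare ⌈r⌉ (2 * ⌈r⌉)).card : ℝ) := by
    rw [card_latticeSquare (by omega)]
    push_cast
    exact pow_le_pow_left₀ (by linarith) (by linarith) 2
  have hterm : ∀ n ∈ latticeSquare ⌈r⌉ (2 * ⌈r⌉),
      (4 * r) ^ (-p) ≤ (annulus r (4 * r)).indicator (fun n => ‖intVec n‖ ^ (-p)) n := by
    intro n hn
    have hmem := latticeSquare_ceil_subset_annulus hr hn
    rw [Set.indicator_of_mem hmem]
    exact Real.rpow_le_rpow_of_nonpos (by linarith [hmem.1]) hmem.2 (neg_nonpos.mpr hp)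
  have hsubset : latticeSquare ⌈r⌉ (2 * ⌈r⌉) ⊆ latticeSquare (-⌈4 * r⌉) ⌈4 * r⌉ :=
    fun n hn => mem_latticeSquare_of_norm_intVec_le
      (((latticeSquare_ceil_subset_annulus hr) hn).2.trans (Int.le_ceil _))
  rw [annulusSum_eq_sum_latticeSquare]
  calc r ^ 2 * (4 * r) ^ (-p)
      ≤ (latticeSquare ⌈r⌉ (2 * ⌈r⌉)).card • (4 * r) ^ (-p) := by
        rw [nsmul_eq_mul]
        exact mul_le_mul_of_nonneg_right hcard (by positivity)
    _ ≤ _ := Finset.card_nsmul_le_sum _ _ _ hterm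
    _ ≤ _ := Finset.sum_le_sum_of_subset_of_nonneg hsubset
        fun n _ _ => Set.indicator_nonneg (fun n _ => by positivity) n

lemma annulusSum_four_mul_bounds {p r : ℝ} (hp : 0 ≤ p) (hr : 3 ≤ r) :
    4 ^ (-p) * r ^ (2 - p) ≤ annulusSum p r (4 * r) ∧
      annulusSum p r (4 * r) ≤ 81 * r ^ (2 - p) := by
  have hr0 : 0 < r := by linarith
  have hsplit : r ^ (2 - p) = r ^ 2 * r ^ (-p) := by
    rw [sub_eq_add_neg, Real.rpow_add hr0, Real.rpow_two]
  constructor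
  · calc 4 ^ (-p) * r ^ (2 - p) = r ^ 2 * (4 * r) ^ (-p) := by
          rw [hsplit, Real.mul_rpow (by norm_num) hr0.le]; ring
      _ ≤ annulusSum p r (4 * r) := le_annulusSum_four_mul hp hr
  · calc annulusSum p r (4 * r) ≤ (2 * (4 * r) + 3) ^ 2 * r ^ (-p) :=
          annulusSum_le hp hr0 (by linarith)
      _ ≤ (9 * r) ^ 2 * r ^ (-p) := by gcongr; linarith
      _ = 81 * r ^ (2 - p) := by rw [hsplit]; ring

section Scale

variable {δ : ℝ} (x : ℝ)

lemma two_rpow_sub_one_div_scale (hδ : 1 + δ ≠ 0) :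
    (2 : ℝ) ^ (x - 1) / 2 ^ ((1 + 2 * δ) / (2 + 2 * δ) * x) = 2 ^ (x / (2 + 2 * δ) - 1) := by
  rw [← Real.rpow_sub two_pos]
  congr 1
  field_simp
  ring

lemma two_rpow_add_one_div_scale (hδ : 1 + δ ≠ 0) :
    (2 : ℝ) ^ (x + 1) / 2 ^ ((1 + 2 * δ) / (2 + 2 * δ) * x) =
      4 * 2 ^ (x / (2 + 2 * δ) - 1) := by
  rw [← Real.rpow_sub two_pos, show (4 : ℝ) = 2 ^ (2 : ℝ) by norm_num, ← Real.rpow_add two_pos]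
  congr 1
  field_simp
  ring

lemma two_rpow_scale_rpow (hδ : 1 + δ ≠ 0) :
    ((2 : ℝ) ^ (x / (2 + 2 * δ) - 1)) ^ (2 - (4 + 2 * δ)) = 2 ^ (2 + 2 * δ) * 2 ^ (-x) := by
  rw [← Real.rpow_mul zero_le_two, ← Real.rpow_add two_pos]
  congr 1
  field_simp
  ring

lemma three_le_two_rpow_scale (hδ : 0 < 1 + δ) (hx : 3 * (2 + 2 * δ) ≤ x) :
    3 ≤ (2 : ℝ) ^ (x / (2 + 2 * δ) - 1) := by
  have hexp : 2 ≤ x / (2 + 2 * δ) - 1 := by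
    rw [le_sub_iff_add_le, le_div_iff₀ (by linarith)]
    linarith
  calc (3 : ℝ) ≤ 2 ^ (2 : ℝ) := by norm_num
    _ ≤ 2 ^ (x / (2 + 2 * δ) - 1) := Real.rpow_le_rpow_of_exponent_le one_le_two hexp

end Scale

/-- Energy matching for power-law coefficients: with `s_j = 2^{((1+2δ)/(2+2δ)) j}`,
the product of lattice sums is comparable to `2^{-j}`. -/
theorem energy_matching_power_law (δ : ℝ) (hδ : 0 < δ) :
    ∃ c₁ > (0 : ℝ), ∃ c₂ > (0 : ℝ), ∃ j₀ : ℕ, ∀ j : ℕ, j₀ ≤ j →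
      c₁ * (2 : ℝ) ^ (-(j : ℝ)) ≤
          (∑' m : ℤ × ℤ,
              Set.indicator {m : ℤ × ℤ | m ≠ 0}
                (fun m => ‖intVec m‖ ^ (-(4 + 2 * δ))) m) *
            (∑' n : ℤ × ℤ,
              Set.indicator {n : ℤ × ℤ |
                  (2 : ℝ) ^ ((j : ℝ) - 1) / (2 : ℝ) ^ (((1 + 2 * δ) / (2 + 2 * δ)) * (j : ℝ)) ≤
                    ‖intVec n‖ ∧
                  ‖intVec n‖ ≤
                    (2 : ℝ) ^ ((j : ℝ) + 1) / (2 : ℝ) ^ (((1 + 2 * δ) / (2 + 2 * δ)) * (j : ℝ))}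
                (fun n => ‖intVec n‖ ^ (-(4 + 2 * δ))) n) ∧
        (∑' m : ℤ × ℤ,
              Set.indicator {m : ℤ × ℤ | m ≠ 0}
                (fun m => ‖intVec m‖ ^ (-(4 + 2 * δ))) m) *
            (∑' n : ℤ × ℤ,
              Set.indicator {n : ℤ × ℤ |
                  (2 : ℝ) ^ ((j : ℝ) - 1) / (2 : ℝ) ^ (((1 + 2 * δ) / (2 + 2 * δ)) * (j : ℝ)) ≤
                    ‖intVec n‖ ∧
                  ‖intVec n‖ ≤
                    (2 : ℝ) ^ ((j : ℝ) + 1) / (2 : ℝ) ^ (((1 + 2 * δ) / (2 + 2 * δ)) * (j : ℝ))}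
                (fun n => ‖intVec n‖ ^ (-(4 + 2 * δ))) n) ≤
          c₂ * (2 : ℝ) ^ (-(j : ℝ)) := by
  have hδ' : 0 < 1 + δ := by linarith
  have hS := one_le_latticeZeta (p := 4 + 2 * δ) (by linarith)
  refine ⟨latticeZeta (4 + 2 * δ) * 4 ^ (-(4 + 2 * δ)) * 2 ^ (2 + 2 * δ), by positivity,
    latticeZeta (4 + 2 * δ) * 81 * 2 ^ (2 + 2 * δ), by positivity, ⌈3 * (2 + 2 * δ)⌉₊,
    fun j hj => ?_⟩
  set r : ℝ := 2 ^ ((j : ℝ) / (2 + 2 * δ) - 1)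
  have hr : 3 ≤ r := three_le_two_rpow_scale j hδ' (Nat.ceil_le.mp hj)
  rw [two_rpow_sub_one_div_scale j hδ'.ne', two_rpow_add_one_div_scale j hδ'.ne']
  change _ ≤ latticeZeta (4 + 2 * δ) * annulusSum (4 + 2 * δ) r (4 * r) ∧
    latticeZeta (4 + 2 * δ) * annulusSum (4 + 2 * δ) r (4 * r) ≤ _
  obtain ⟨hlower, hupper⟩ := annulusSum_four_mul_bounds (p := 4 + 2 * δ) (by linarith) hr
  rw [two_rpow_scale_rpow j hδ'.ne'] at hlower hupper
  constructor
  · calc _ = latticeZeta (4 + 2 * δ) * (4 ^ (-(4 + 2 * δ)) * (2 ^ (2 + 2 * δ) * 2 ^ (-(j : ℝ)))) := by ring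
      _ ≤ _ := by gcongr
  · calc _ ≤ latticeZeta (4 + 2 * δ) * (81 * (2 ^ (2 + 2 * δ) * 2 ^ (-(j : ℝ)))) := by gcongr
      _ = _ := by ring

end
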